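/- arXiv:2404.08839 — 4 statements merged into one kernel-verified Lean document; each statement's English description precedes it below -/
import Mathlib

section
/- (Double robustness, case 1: correct regression) Suppose g(X) equals the true regression function γ(X) = E_{P⁰}[Y|X], and a : 𝒳 → ℝ is any function with E_{P⁰}[a(X)²] < ∞. Assume E_{P⁰}[Y²] < ∞, P¹_X ≪ P⁰_X, and E_{P⁰}[(dP¹_X/dP⁰_X)²] < ∞. Then E_{P¹}[g(X)] + E_{P⁰}[a(X)·(Y − g(X))] = θ, where θ = ∫∫ y dP⁰_{Y|X}(y|x) dP¹_X(x). -/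
open MeasureTheory ProbabilityTheory
open scoped ENNReal

/-! The correction term vanishes fiberwise: conditionally on `X = x`, the residual `Y - γ(x)`
has mean zero under `P⁰_{Y|X=x}`, so the left side reduces to `∫ γ dP¹_X`, which is `θ` by
Fubini for `P¹_X ⊗ P⁰_{Y|X}`. Fubini applies because this measure has density `dP¹_X/dP⁰_X (x)`
with respect to `P⁰`, and by Cauchy–Schwarz `Y` times an `L²(P⁰)` density is `P⁰`-integrable. -/

section

variable {α β E : Type*} [MeasurableSpace α] [MeasurableSpace β]
  [NormedAddCommGroup E] [NormedSpace ℝ E]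

theorem integral_compProd_eq_zero_of_ae {μ : Measure α} [SFinite μ] {κ : Kernel α β}
    [IsSFiniteKernel κ] {f : α × β → E} (h : ∀ᵐ x ∂μ, ∫ y, f (x, y) ∂κ x = 0) :
    ∫ p, f p ∂(μ ⊗ₘ κ) = 0 := by
  by_cases hf : Integrable f (μ ⊗ₘ κ)
  · rw [Measure.integral_compProd hf]
    exact integral_eq_zero_of_ae h
  · exact integral_undef hf

theorem integrable_compProd_of_memLp_rnDeriv {μ ν : Measure α} [IsFiniteMeasure μ]
    [IsFiniteMeasure ν] {κ : Kernel α β} [IsMarkovKernel κ] {f : α × β → ℝ} {p q : ℝ≥0∞}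
    [ENNReal.HolderTriple p q 1] (hνμ : ν ≪ μ) (hf : MemLp f q (μ ⊗ₘ κ))
    (hρ : MemLp (fun x ↦ (ν.rnDeriv μ x).toReal) p μ) :
    Integrable f (ν ⊗ₘ κ) := by
  have hfst : MeasurePreserving Prod.fst (μ ⊗ₘ κ) μ := ⟨measurable_fst, Measure.fst_compProd μ κ⟩
  have hρf : Integrable (fun z ↦ (ν.rnDeriv μ z.1).toReal * f z) (μ ⊗ₘ κ) :=
    memLp_one_iff_integrable.mp (hf.mul' (hρ.comp_measurePreserving hfst))
  have hdensity : (fun z ↦ (ν.rnDeriv μ z.1).toReal * f z)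
      =ᵐ[μ ⊗ₘ κ] fun z ↦ ((ν ⊗ₘ κ).rnDeriv (μ ⊗ₘ κ) z).toReal * f z := by
    filter_upwards [rnDeriv_measure_compProd_left ν μ κ] with z hz
    rw [hz]
  exact (integrable_toReal_rnDeriv_mul_iff (hνμ.compProd_left κ)).mp (hρf.congr hdensity)

end

theorem doubly_robust_correct_regression_general
    {𝓧 : Type*} [MeasurableSpace 𝓧]
    (P0 P1 : Measure (𝓧 × ℝ)) [IsProbabilityMeasure P0] [IsProbabilityMeasure P1]
    (hac : P1.fst ≪ P0.fst)
    (hY : MemLp (fun p : 𝓧 × ℝ => p.2) 2 P0)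
    (hα : MemLp (fun x => (P1.fst.rnDeriv P0.fst x).toReal) 2 P0.fst)
    (a : 𝓧 → ℝ) :
    (∫ x, (∫ y, y ∂(P0.condKernel x)) ∂P1.fst)
      + ∫ p, a p.1 * (p.2 - ∫ y, y ∂(P0.condKernel p.1)) ∂P0 =
      ∫ p, p.2 ∂(P1.fst.compProd P0.condKernel) := by
  have hP0 : P0.fst ⊗ₘ P0.condKernel = P0 := P0.disintegrate _
  have hθ : ∫ p, p.2 ∂(P1.fst ⊗ₘ P0.condKernel) = ∫ x, ∫ y, y ∂(P0.condKernel x) ∂P1.fst :=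
    Measure.integral_compProd
      (integrable_compProd_of_memLp_rnDeriv (p := 2) (q := 2) hac (by rwa [hP0]) hα)
  have hcorrection : ∫ p, a p.1 * (p.2 - ∫ y, y ∂(P0.condKernel p.1)) ∂P0 = 0 := by
    have hfiber : ∀ x, ∫ y, a x * (y - ∫ z, z ∂(P0.condKernel x)) ∂(P0.condKernel x) = 0 := by
      intro x
      have hcentered := integral_sub_average (P0.condKernel x) (fun y ↦ y)
      rw [average_eq_integral] at hcentered
      rw [integral_const_mul, hcentered, mul_zero]
    simpa only [hP0] using integral_compProd_eq_zero_of_ae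
      (f := fun p ↦ a p.1 * (p.2 - ∫ y, y ∂(P0.condKernel p.1))) (ae_of_all P0.fst hfiber)
  rw [hcorrection, add_zero, ← hθ]

/-- Double robustness, case 1: correct regression: with
g(x) = γ(x) = E_{P⁰}[Y|X=x] (realized via the disintegration kernel of P⁰) and
any square-integrable weight function a,
E_{P¹}[g(X)] + E_{P⁰}[a(X)(Y − g(X))] = θ. -/
theorem doubly_robust_correct_regression
    {𝓧 : Type*} [MeasurableSpace 𝓧]
    (P0 P1 : Measure (𝓧 × ℝ)) [IsProbabilityMeasure P0] [IsProbabilityMeasure P1]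
    (hac : P1.fst ≪ P0.fst)
    (hY : MemLp (fun p : 𝓧 × ℝ => p.2) 2 P0)
    (hα : MemLp (fun x => (P1.fst.rnDeriv P0.fst x).toReal) 2 P0.fst)
    (a : 𝓧 → ℝ) (ham : Measurable a) (ha : MemLp a 2 P0.fst) :
    (∫ x, (∫ y, y ∂(P0.condKernel x)) ∂P1.fst)
      + ∫ p, a p.1 * (p.2 - ∫ y, y ∂(P0.condKernel p.1)) ∂P0 =
      ∫ p, p.2 ∂(P1.fst.compProd P0.condKernel) :=
  doubly_robust_correct_regression_general P0 P1 hac hY hα a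
end

section
/- (Multiply-robust identification, K = 2, regression–weight configuration) Let P⁰, P¹ be joint laws of (X₁, X₂, Y). Define θ = ∫∫∫ h(y) dP⁰_{Y|X₁,X₂}(y|x₁,x₂) dP¹_{X₂|X₁}(x₂|x₁) dP⁰_{X₁}(x₁). Suppose g₂(x₁,x₂) is any square-integrable function, a₂(x₁,x₂) = α₂(x₁,x₂) := dP¹_{X₂|X₁}/dP⁰_{X₂|X₁}(x₂|x₁) is the true conditional Radon–Nikodym derivative, g₁(x₁) = γ₁(x₁) := E_{P¹}[g₂(X₁,X₂)|X₁ = x₁] is the correct nested regression of g₂, and a₁ is any square-integrable function. Then E_{P⁰}[g₁(X₁)] + E_{P¹}[a₁(X₁)(g₂(X₁,X₂) − g₁(X₁))] + E_{P⁰}[α₂(X₁,X₂)(h(Y) − g₂(X₁,X₂))] = θ, even though g₂ may be misspecified. -/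
/-!
Write `K₁ = P¹_{X₂|X₁}`, `K₀ = P⁰_{X₂|X₁}` and `α₂ = dK₁/dK₀`. The middle term vanishes because
`g₂ - γ₁` has zero `K₁`-conditional mean given `X₁`. In the last term, conditioning on `(X₁, X₂)`
replaces `h(Y)` by its `P⁰`-regression `Eh`, and the weight `α₂` turns integration against `K₀`
into integration against `K₁`; it thus equals `∫ (K₁ Eh - K₁ g₂) dP⁰_{X₁}`, and the first term
`∫ K₁ g₂ dP⁰_{X₁}` cancels the misspecified part.
-/

open MeasureTheory ProbabilityTheory

lemma abs_integral_le_of_forall_abs_le {β : Type*} [MeasurableSpace β] {μ : Measure β}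
    [IsProbabilityMeasure μ] {f : β → ℝ} {C : ℝ} (hC : ∀ y, |f y| ≤ C) :
    |∫ y, f y ∂μ| ≤ C := by
  simpa using norm_integral_le_of_norm_le_const (μ := μ) (f := f) (ae_of_all _ hC)

namespace ProbabilityTheory.Kernel

variable {α Ω : Type*} [MeasurableSpace α] [MeasurableSpace Ω]
  [MeasurableSpace.CountableOrCountablyGenerated α Ω] {κ η : Kernel α Ω}
  [IsFiniteKernel κ] [IsFiniteKernel η] {a : α} {f : Ω → ℝ}

lemma integrable_toReal_rnDeriv_mul_iff (hac : κ a ≪ η a) :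
    Integrable (fun ω => (κ.rnDeriv η a ω).toReal * f ω) (η a) ↔ Integrable f (κ a) := by
  rw [← MeasureTheory.integrable_toReal_rnDeriv_mul_iff hac]
  exact integrable_congr
    ((rnDeriv_eq_rnDeriv_measure (κ := κ)).mono fun ω hω => by simp only [hω])

lemma integral_toReal_rnDeriv_mul (hac : κ a ≪ η a) :
    ∫ ω, (κ.rnDeriv η a ω).toReal * f ω ∂η a = ∫ ω, f ω ∂κ a := by
  rw [← MeasureTheory.integral_toReal_rnDeriv_mul hac]
  exact integral_congr_ae
    ((rnDeriv_eq_rnDeriv_measure (κ := κ)).mono fun ω hω => by simp only [hω])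

end ProbabilityTheory.Kernel

section Disintegration

variable {α Ω : Type*} [MeasurableSpace α] [MeasurableSpace Ω] [StandardBorelSpace Ω]
  [Nonempty Ω] {ρ : Measure (α × Ω)} [IsFiniteMeasure ρ]

lemma integral_mul_fst_eq_integral_mul_integral_condKernel {F : α → ℝ} {G : α × Ω → ℝ}
    (hFG : Integrable (fun ω => F ω.1 * G ω) ρ) :
    ∫ ω, F ω.1 * G ω ∂ρ = ∫ a, F a * ∫ y, G (a, y) ∂ρ.condKernel a ∂ρ.fst := by
  rw [← Measure.integral_condKernel hFG]
  simp_rw [integral_const_mul]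

lemma integral_mul_sub_integral_condKernel_eq_zero {F : α → ℝ} {G : α × Ω → ℝ}
    (hFG : Integrable (fun ω => F ω.1 * G ω) ρ) :
    ∫ ω, F ω.1 * (G ω - ∫ y, G (ω.1, y) ∂ρ.condKernel ω.1) ∂ρ = 0 := by
  have hFm : Integrable (fun a => F a * ∫ y, G (a, y) ∂ρ.condKernel a) ρ.fst := by
    simpa only [integral_const_mul] using hFG.integral_condKernel
  have hFm_fst : Integrable (fun ω => F ω.1 * ∫ y, G (ω.1, y) ∂ρ.condKernel ω.1) ρ :=
    hFm.comp_measurable measurable_fst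
  simp_rw [mul_sub]
  rw [integral_sub hFG hFm_fst, integral_mul_fst_eq_integral_mul_integral_condKernel hFG,
    ← integral_map measurable_fst.aemeasurable hFm.aestronglyMeasurable]
  exact sub_self _

lemma integral_mul_sub_eq_integral_mul_integral_condKernel_sub {F g : α → ℝ} {h : Ω → ℝ}
    {C : ℝ} (hF : Integrable F ρ.fst) (hFg : Integrable (fun a => F a * g a) ρ.fst)
    (hh : Measurable h) (hC : ∀ y, |h y| ≤ C) :
    ∫ ω, F ω.1 * (h ω.2 - g ω.1) ∂ρ = ∫ a, F a * ((∫ y, h y ∂ρ.condKernel a) - g a) ∂ρ.fst := by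
  have hFh : Integrable (fun ω => F ω.1 * h ω.2) ρ :=
    (hF.comp_measurable measurable_fst).mul_bdd (hh.comp measurable_snd).aestronglyMeasurable
      (ae_of_all _ fun ω => hC ω.2)
  have hFG : Integrable (fun ω => F ω.1 * (h ω.2 - g ω.1)) ρ := by
    simp_rw [mul_sub]
    exact hFh.sub (hFg.comp_measurable measurable_fst)
  rw [integral_mul_fst_eq_integral_mul_integral_condKernel hFG]
  refine integral_congr_ae (ae_of_all _ fun a => ?_)
  have hh_int : Integrable h (ρ.condKernel a) :=
    .of_bound hh.aestronglyMeasurable C (ae_of_all _ hC)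
  dsimp only
  rw [integral_sub hh_int (integrable_const _), integral_const, probReal_univ, one_smul]

variable {κ : Kernel α Ω} [IsFiniteKernel κ]

/-- Double robustness of a single stage: with the correct weight `dκ/dρ.condKernel`, the
regression `g` of `e` may be arbitrary. -/
theorem integral_integral_add_integral_rnDeriv_mul_sub {e g : α × Ω → ℝ}
    (hac : ∀ᵐ a ∂ρ.fst, κ a ≪ ρ.condKernel a)
    (hre : Integrable (fun q => (κ.rnDeriv ρ.condKernel q.1 q.2).toReal * e q) ρ)
    (hrg : Integrable (fun q => (κ.rnDeriv ρ.condKernel q.1 q.2).toReal * g q) ρ)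
    (he : Integrable (fun a => ∫ y, e (a, y) ∂κ a) ρ.fst) :
    (∫ a, ∫ y, g (a, y) ∂κ a ∂ρ.fst)
        + ∫ q, (κ.rnDeriv ρ.condKernel q.1 q.2).toReal * (e q - g q) ∂ρ
      = ∫ a, ∫ y, e (a, y) ∂κ a ∂ρ.fst := by
  have hD : Integrable (fun q => (κ.rnDeriv ρ.condKernel q.1 q.2).toReal * (e q - g q)) ρ := by
    simp_rw [mul_sub]
    exact hre.sub hrg
  have hinner : ∀ᵐ a ∂ρ.fst,
      ∫ y, (κ.rnDeriv ρ.condKernel a y).toReal * (e (a, y) - g (a, y)) ∂ρ.condKernel a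
        = ∫ y, e (a, y) ∂κ a - ∫ y, g (a, y) ∂κ a := by
    filter_upwards [hac, hre.condKernel_ae, hrg.condKernel_ae] with a ha hea hga
    rw [Kernel.integral_toReal_rnDeriv_mul ha,
      integral_sub ((Kernel.integrable_toReal_rnDeriv_mul_iff ha).1 hea)
        ((Kernel.integrable_toReal_rnDeriv_mul_iff ha).1 hga)]
  rw [← Measure.integral_condKernel hD, ← eq_sub_iff_add_eq,
    ← integral_sub he hD.integral_condKernel]
  refine integral_congr_ae (hinner.mono fun a ha => ?_)
  simp only [ha, sub_sub_cancel]

end Disintegration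

theorem multiply_robust_K2_mixed_general
    {𝓧₁ 𝓧₂ : Type*} [MeasurableSpace 𝓧₁]
    [MeasurableSpace 𝓧₂] [StandardBorelSpace 𝓧₂] [Nonempty 𝓧₂]
    (P0 P1 : Measure ((𝓧₁ × 𝓧₂) × ℝ))
    [IsProbabilityMeasure P0] [IsProbabilityMeasure P1]
    (h : ℝ → ℝ) (hh : Measurable h) (hbd : ∃ C, ∀ y, |h y| ≤ C)
    (g₂ : 𝓧₁ × 𝓧₂ → ℝ)
    (hg₂0 : MemLp g₂ 2 P0.fst) (hg₂1 : MemLp g₂ 2 P1.fst)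
    (a₁ : 𝓧₁ → ℝ)
    (ha₁ : MemLp (fun q : 𝓧₁ × 𝓧₂ => a₁ q.1) 2 P1.fst)
    -- the conditional distributions P¹_{X₂|X₁} and P⁰_{X₂|X₁} are mutually a.c.
    (hacK : ∀ᵐ x₁ ∂(P0.fst.fst), P1.fst.condKernel x₁ ≪ P0.fst.condKernel x₁)
    -- square-integrability of the true conditional RN derivative α₂
    (hα₂ : MemLp (fun q : 𝓧₁ × 𝓧₂ =>
      (Kernel.rnDeriv P1.fst.condKernel P0.fst.condKernel q.1 q.2).toReal) 2 P0.fst) :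
    (∫ x₁, (∫ x₂, g₂ (x₁, x₂) ∂(P1.fst.condKernel x₁)) ∂(P0.fst.fst))
      + (∫ q, a₁ q.1 * (g₂ q - ∫ x₂, g₂ (q.1, x₂) ∂(P1.fst.condKernel q.1)) ∂P1.fst)
      + (∫ ω, (Kernel.rnDeriv P1.fst.condKernel P0.fst.condKernel ω.1.1 ω.1.2).toReal
            * (h ω.2 - g₂ ω.1) ∂P0)
    = ∫ x₁, (∫ x₂, (∫ y, h y ∂(P0.condKernel (x₁, x₂)))
        ∂(P1.fst.condKernel x₁)) ∂(P0.fst.fst) := by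
  obtain ⟨C, hC⟩ := hbd
  have hEh_meas : StronglyMeasurable fun q => ∫ y, h y ∂P0.condKernel q :=
    (hh.comp measurable_snd).stronglyMeasurable.integral_kernel_prod_right'
  have hEh_bdd : ∀ q, |∫ y, h y ∂P0.condKernel q| ≤ C := fun _ =>
    abs_integral_le_of_forall_abs_le hC
  have hθ_int : Integrable (fun x₁ =>
      ∫ x₂, ∫ y, h y ∂P0.condKernel (x₁, x₂) ∂P1.fst.condKernel x₁) P0.fst.fst :=
    .of_bound hEh_meas.integral_kernel_prod_right'.aestronglyMeasurable C
      (ae_of_all _ fun x₁ => abs_integral_le_of_forall_abs_le fun x₂ => hEh_bdd (x₁, x₂))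
  have hα₂_int := hα₂.integrable one_le_two
  have hα₂g₂ := hα₂.integrable_mul hg₂0
  rw [integral_mul_sub_integral_condKernel_eq_zero (ha₁.integrable_mul hg₂1), add_zero,
    integral_mul_sub_eq_integral_mul_integral_condKernel_sub hα₂_int hα₂g₂ hh hC]
  exact integral_integral_add_integral_rnDeriv_mul_sub hacK
    (hα₂_int.mul_bdd hEh_meas.aestronglyMeasurable (ae_of_all _ hEh_bdd)) hα₂g₂ hθ_int

/-- Multiply-robust identification, K = 2, regression–weight
configuration: with the second weight a₂ = α₂ the true conditional RN
derivative and the first regression g₁ = γ₁ the correct nested regression of an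
arbitrary square-integrable g₂, the MR estimating equation identifies
θ = ∫∫∫ h(y) dP⁰_{Y|X₁,X₂} dP¹_{X₂|X₁} dP⁰_{X₁}. -/
theorem multiply_robust_K2_mixed
    {𝓧₁ 𝓧₂ : Type*} [MeasurableSpace 𝓧₁]
    [MeasurableSpace 𝓧₂] [StandardBorelSpace 𝓧₂] [Nonempty 𝓧₂]
    (P0 P1 : Measure ((𝓧₁ × 𝓧₂) × ℝ))
    [IsProbabilityMeasure P0] [IsProbabilityMeasure P1]
    (h : ℝ → ℝ) (hh : Measurable h) (hbd : ∃ C, ∀ y, |h y| ≤ C)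
    (g₂ : 𝓧₁ × 𝓧₂ → ℝ) (hg₂m : Measurable g₂)
    (hg₂0 : MemLp g₂ 2 P0.fst) (hg₂1 : MemLp g₂ 2 P1.fst)
    (a₁ : 𝓧₁ → ℝ) (ha₁m : Measurable a₁)
    (ha₁ : MemLp (fun q : 𝓧₁ × 𝓧₂ => a₁ q.1) 2 P1.fst)
    -- the conditional distributions P¹_{X₂|X₁} and P⁰_{X₂|X₁} are mutually a.c.
    (hacK : ∀ᵐ x₁ ∂(P0.fst.fst), P1.fst.condKernel x₁ ≪ P0.fst.condKernel x₁)
    -- square-integrability of the true conditional RN derivative α₂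
    (hα₂ : MemLp (fun q : 𝓧₁ × 𝓧₂ =>
      (Kernel.rnDeriv P1.fst.condKernel P0.fst.condKernel q.1 q.2).toReal) 2 P0.fst) :
    (∫ x₁, (∫ x₂, g₂ (x₁, x₂) ∂(P1.fst.condKernel x₁)) ∂(P0.fst.fst))
      + (∫ q, a₁ q.1 * (g₂ q - ∫ x₂, g₂ (q.1, x₂) ∂(P1.fst.condKernel q.1)) ∂P1.fst)
      + (∫ ω, (Kernel.rnDeriv P1.fst.condKernel P0.fst.condKernel ω.1.1 ω.1.2).toReal
            * (h ω.2 - g₂ ω.1) ∂P0)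
    = ∫ x₁, (∫ x₂, (∫ y, h y ∂(P0.condKernel (x₁, x₂)))
        ∂(P1.fst.condKernel x₁)) ∂(P0.fst.fst) :=
  multiply_robust_K2_mixed_general P0 P1 h hh hbd g₂ hg₂0 hg₂1 a₁ ha₁ hacK hα₂
end

section
/- (Telescoping of debiasing terms with true weights) Let Q be a (possibly counterfactual) probability measure on a space 𝒵 = 𝒳₁ × ⋯ × 𝒳_K × ℝ of the form Q = P^{(c_{K+1})}_{Y|X̄_K} ⊗ P^{(c_K)}_{X_K|X̄_{K-1}} ⊗ ⋯ ⊗ P^{(c_1)}_{X₁}, where each factor comes from one of two joint probability measures P⁰, P¹. For 1 ≤ k ≤ K, let α_k(X̄_k) be the Radon–Nikodym derivative (assumed to exist and be square-integrable under P^{(c_{k+1})}) of the measure ∏_{j≤k} P^{(c_j)}_{X_j|X̄_{j-1}} with respect to the factual law of X̄_k under P^{(c_{k+1})}. Then for any square-integrable functions g₁,…,g_K and with g_{K+1} := h(Y) bounded, E_{(c₁)}[g₁(X₁)] + Σ_{k=1}^K E_{(c_{k+1})}[α_k(X̄_k)(g_{k+1}(X̄_{k+1}) − g_k(X̄_k))]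 = E_Q[h(Y)]. -/
/-!
Under `P^{(c_{k+1})}`, the law of `X̄_{k+1}` is the law `ν_k` of `X̄_k` followed by the
conditional kernel of `X_{k+1}`, the same kernel that extends the counterfactual law `M_k` of
`X̄_k` to `M_{k+1}`.
Since `∂(μ ⊗ κ)/∂(ν ⊗ κ) = (∂μ/∂ν) ∘ fst`, weighting by `α_k = ∂M_k/∂ν_k` turns the `k`-th
debiasing term into `E_{M_{k+1}}[g_{k+1}] - E_{M_k}[g_k]` (into `E_Q[h] - E_{M_K}[g_K]` for
`k = K`), and the sum telescopes down to `E_{M_1}[g_1] = E_{(c_1)}[g_1(X_1)]`. Cauchy–Schwarz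
makes each `g_k` integrable under `M_k`, which justifies splitting the integrals.
-/

open MeasureTheory ProbabilityTheory
open scoped ENNReal

/-- The counterfactual law of `X̄ₖ = (X₁, …, Xₖ)` built by composing the
conditional-mechanism kernels `κ 0, …, κ (k-1)`. -/
noncomputable def seqMeasure {𝓧 : Type*} [MeasurableSpace 𝓧]
    (κ : (k : ℕ) → Kernel (Fin k → 𝓧) 𝓧) : (k : ℕ) → Measure (Fin k → 𝓧)
  | 0 => Measure.dirac (fun i => i.elim0)
  | (k + 1) => (seqMeasure κ k).bind (fun v => (κ k v).map (fun x => Fin.snoc v x))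

/-- Restriction of a tuple to its first `k` coordinates (junk value beyond `K`). -/
def restr {𝓧 : Type*} [Inhabited 𝓧] (K : ℕ) (x : Fin K → 𝓧) (k : ℕ) : Fin k → 𝓧 :=
  fun i => if h : (i : ℕ) < K then x ⟨i, h⟩ else default

namespace MeasureTheory.Measure

variable {α β γ Ω : Type*} [MeasurableSpace α] [MeasurableSpace β] [MeasurableSpace γ]
  [MeasurableSpace Ω]

lemma bind_map_eq_map_compProd (μ : Measure α) [SFinite μ] (κ : Kernel α β) [IsSFiniteKernel κ]
    {f : α → β → γ} (hf : Measurable (Function.uncurry f)) :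
    μ.bind (fun a => (κ a).map (f a)) = (μ ⊗ₘ κ).map (Function.uncurry f) := by
  rw [compProd_eq_comp_prod, map_comp _ _ hf]
  congr 1
  funext a
  rw [Kernel.map_apply _ hf, Kernel.prod_apply, Kernel.id_apply, dirac_prod,
    map_map hf measurable_prodMk_left]
  rfl

lemma map_bind_map_eq_self (μ : Measure α) [SFinite μ] (κ : Kernel α β) [IsMarkovKernel κ]
    {f : α → β → γ} (hf : Measurable (Function.uncurry f)) {H : γ → α} (hH : Measurable H)
    (hHf : ∀ a b, H (f a b) = a) :
    (μ.bind fun a => (κ a).map (f a)).map H = μ := by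
  rw [bind_map_eq_map_compProd μ κ hf, map_map hH hf]
  have : H ∘ Function.uncurry f = Prod.fst := funext fun p => hHf p.1 p.2
  rw [this, ← Measure.fst, fst_compProd]

section ChangeOfMeasure

variable {μ ν : Measure α} [IsFiniteMeasure μ] [IsFiniteMeasure ν]

lemma integral_rnDeriv_fst_mul_compProd (hμν : μ ≪ ν) (κ : Kernel α β) [IsFiniteKernel κ]
    (F : α × β → ℝ) :
    ∫ p, (μ.rnDeriv ν p.1).toReal * F p ∂(ν ⊗ₘ κ) = ∫ p, F p ∂(μ ⊗ₘ κ) := by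
  rw [← integral_rnDeriv_smul (hμν.compProd_left κ)]
  refine integral_congr_ae ?_
  filter_upwards [rnDeriv_measure_compProd_left μ ν κ] with p hp
  rw [hp, smul_eq_mul]

lemma integral_rnDeriv_comp_mul_bind (hμν : μ ≪ ν) (κ : Kernel α β) [IsFiniteKernel κ]
    {f : α → β → γ} (hf : Measurable (Function.uncurry f)) {H : γ → α}
    (hH : Measurable H) (hHf : ∀ a b, H (f a b) = a) {G : γ → ℝ} (hG : Measurable G) :
    ∫ z, (μ.rnDeriv ν (H z)).toReal * G z ∂(ν.bind fun a => (κ a).map (f a))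
      = ∫ z, G z ∂(μ.bind fun a => (κ a).map (f a)) := by
  have hρG : Measurable fun z => (μ.rnDeriv ν (H z)).toReal * G z :=
    ((measurable_rnDeriv μ ν).comp hH).ennreal_toReal.mul hG
  rw [bind_map_eq_map_compProd ν κ hf, bind_map_eq_map_compProd μ κ hf,
    integral_map hf.aemeasurable hρG.aestronglyMeasurable,
    integral_map hf.aemeasurable hG.aestronglyMeasurable]
  simp only [Function.uncurry, hHf]
  exact integral_rnDeriv_fst_mul_compProd hμν κ _

variable {P : Measure Ω} [IsFiniteMeasure P] {X : Ω → α}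

lemma integrable_of_integrable_rnDeriv_map_mul (hX : Measurable X) (hμ : μ ≪ P.map X)
    {G : α → ℝ} (hG : Measurable G)
    (hint : Integrable (fun ω => (μ.rnDeriv (P.map X) (X ω)).toReal * G (X ω)) P) :
    Integrable G μ := by
  have hρG : AEStronglyMeasurable (fun a => (μ.rnDeriv (P.map X) a).toReal * G a) (P.map X) :=
    ((measurable_rnDeriv μ (P.map X)).ennreal_toReal.mul hG).aestronglyMeasurable
  rw [← integrable_rnDeriv_smul_iff hμ]
  exact (integrable_map_measure hρG hX.aemeasurable).mpr hint

lemma integral_rnDeriv_map_mul_sub {Z : Ω → γ} (hZ : Measurable Z) {H : γ → α}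
    (hH : Measurable H) (hHZ : ∀ ω, H (Z ω) = X ω) (κ : Kernel α β) [IsMarkovKernel κ]
    {f : α → β → γ} (hf : Measurable (Function.uncurry f)) (hHf : ∀ a b, H (f a b) = a)
    (hlaw : P.map Z = (P.map X).bind fun a => (κ a).map (f a)) (hμ : μ ≪ P.map X)
    {G : γ → ℝ} {F : α → ℝ} (hG : Measurable G) (hF : Measurable F)
    (hGi : Integrable G (μ.bind fun a => (κ a).map (f a))) (hFi : Integrable F μ) :
    ∫ ω, (μ.rnDeriv (P.map X) (X ω)).toReal * (G (Z ω) - F (X ω)) ∂P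
      = ∫ z, G z ∂(μ.bind fun a => (κ a).map (f a)) - ∫ a, F a ∂μ := by
  have hmarg := map_bind_map_eq_self μ κ hf hH hHf
  have hGF : Measurable fun z => G z - F (H z) := hG.sub (hF.comp hH)
  have hFHi : Integrable (fun z => F (H z)) (μ.bind fun a => (κ a).map (f a)) :=
    (integrable_map_measure hF.aestronglyMeasurable hH.aemeasurable).mp (by rwa [hmarg])
  have hρGF : AEStronglyMeasurable
      (fun z => (μ.rnDeriv (P.map X) (H z)).toReal * (G z - F (H z))) (P.map Z) :=
    (((measurable_rnDeriv _ _).comp hH).ennreal_toReal.mul hGF).aestronglyMeasurable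
  calc ∫ ω, (μ.rnDeriv (P.map X) (X ω)).toReal * (G (Z ω) - F (X ω)) ∂P
      = ∫ z, (μ.rnDeriv (P.map X) (H z)).toReal * (G z - F (H z)) ∂(P.map Z) := by
        rw [integral_map hZ.aemeasurable hρGF]
        simp only [hHZ]
    _ = ∫ z, G z - F (H z) ∂(μ.bind fun a => (κ a).map (f a)) := by
        rw [hlaw]
        exact integral_rnDeriv_comp_mul_bind hμ κ hf hH hHf hGF
    _ = ∫ z, G z ∂(μ.bind fun a => (κ a).map (f a)) - ∫ a, F a ∂μ := by
        rw [integral_sub hGi hFHi, ← integral_map hH.aemeasurable hF.aestronglyMeasurable,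
          hmarg]

lemma bind_map_prodMk_eq_compProd (μ : Measure α) [SFinite μ] (κ : Kernel α β)
    [IsSFiniteKernel κ] : μ.bind (fun a => (κ a).map (Prod.mk a)) = μ ⊗ₘ κ := by
  rw [bind_map_eq_map_compProd μ κ (f := Prod.mk) measurable_id]
  exact map_id

lemma integral_rnDeriv_fst_mul_sub {P : Measure (α × β)} [IsFiniteMeasure P] (κ : Kernel α β)
    [IsMarkovKernel κ] (hP : P = (P.map Prod.fst).bind fun a => (κ a).map (Prod.mk a))
    (hμ : μ ≪ P.map Prod.fst) {G : β → ℝ} {F : α → ℝ} (hG : Measurable G) (hF : Measurable F)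
    (hGi : Integrable G (κ ∘ₘ μ)) (hFi : Integrable F μ) :
    ∫ p, (μ.rnDeriv (P.map Prod.fst) p.1).toReal * (G p.2 - F p.1) ∂P
      = ∫ b, G b ∂(κ ∘ₘ μ) - ∫ a, F a ∂μ := by
  have hsnd : (μ.bind fun a => (κ a).map (Prod.mk a)).map Prod.snd = κ ∘ₘ μ := by
    rw [bind_map_prodMk_eq_compProd, ← Measure.snd, snd_compProd]
  have hGi' : Integrable (fun p => G p.2) (μ.bind fun a => (κ a).map (Prod.mk a)) :=
    (integrable_map_measure hG.aestronglyMeasurable measurable_snd.aemeasurable).mp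
      (by rwa [hsnd])
  refine (integral_rnDeriv_map_mul_sub (Z := id) measurable_id measurable_fst (fun _ => rfl) κ
    (f := Prod.mk) measurable_id (fun _ _ => rfl) (by rwa [map_id]) hμ (G := fun p => G p.2)
    (hG.comp measurable_snd) hF hGi' hFi).trans ?_
  rw [← integral_map measurable_snd.aemeasurable hG.aestronglyMeasurable, hsnd]

end ChangeOfMeasure

lemma map_eq_dirac_of_subsingleton [Subsingleton β] (P : Measure Ω) [IsProbabilityMeasure P]
    (X : Ω → β) (b : β) : P.map X = dirac b := by
  rw [show X = fun _ => b from funext fun _ => Subsingleton.elim _ _, map_const, measure_univ,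
    one_smul]

end MeasureTheory.Measure

section Sequential

variable {𝓧 : Type*} [MeasurableSpace 𝓧]

lemma measurable_snoc_uncurry {k : ℕ} :
    Measurable
      (Function.uncurry fun (v : Fin k → 𝓧) (x : 𝓧) => (Fin.snoc v x : Fin (k + 1) → 𝓧)) := by
  refine measurable_pi_lambda _ fun i => ?_
  induction i using Fin.lastCases with
  | last => simpa only [Function.uncurry, Fin.snoc_last] using measurable_snd
  | cast j =>
    simp only [Function.uncurry, Fin.snoc_castSucc]
    fun_prop

lemma measurable_init {k : ℕ} : Measurable (fun w : Fin (k + 1) → 𝓧 => Fin.init w) :=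
  measurable_pi_lambda _ fun _ => measurable_pi_apply _

instance isProbabilityMeasure_seqMeasure (κ : (k : ℕ) → Kernel (Fin k → 𝓧) 𝓧)
    [∀ k, IsMarkovKernel (κ k)] (k : ℕ) : IsProbabilityMeasure (seqMeasure κ k) := by
  induction k with
  | zero => rw [seqMeasure]; infer_instance
  | succ k ih =>
    rw [seqMeasure, Measure.bind_map_eq_map_compProd _ _ measurable_snoc_uncurry]
    exact Measure.isProbabilityMeasure_map measurable_snoc_uncurry.aemeasurable

lemma measurable_restr [Inhabited 𝓧] (K k : ℕ) :
    Measurable (fun x : Fin K → 𝓧 => restr K x k) := by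
  refine measurable_pi_lambda _ fun i => ?_
  unfold restr
  split
  · exact measurable_pi_apply _
  · exact measurable_const

end Sequential

section Restr

variable {𝓧 : Type*} [Inhabited 𝓧]

lemma restr_self (K : ℕ) (x : Fin K → 𝓧) : restr K x K = x := by
  funext i
  simp [restr, i.isLt]

lemma init_restr (K k : ℕ) (x : Fin K → 𝓧) : Fin.init (restr K x (k + 1)) = restr K x k := by
  funext i
  simp [restr, Fin.init]

end Restr

/-- Indices are shifted down by one: the paper's `c_k` is `c (k - 1)` here. -/
theorem telescoping_true_weights
    {𝓧 : Type*} [MeasurableSpace 𝓧] [Inhabited 𝓧]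
    (K : ℕ) (hK : 0 < K) (c : ℕ → Bool)
    (P : Bool → Measure ((Fin K → 𝓧) × ℝ)) [∀ t, IsProbabilityMeasure (P t)]
    (κ : (k : ℕ) → Bool → Kernel (Fin k → 𝓧) 𝓧) [∀ k t, IsMarkovKernel (κ k t)]
    (ξ : Bool → Kernel (Fin K → 𝓧) ℝ) [∀ t, IsMarkovKernel (ξ t)]
    -- κ k t is (a version of) the conditional law of X_{k+1} given X̄_k under P t
    (hκ : ∀ t : Bool, ∀ k < K,
      (P t).map (fun ω => restr K ω.1 (k + 1)) =
        ((P t).map (fun ω => restr K ω.1 k)).bind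
          (fun v => (κ k t v).map (fun x => Fin.snoc v x)))
    -- ξ t is (a version of) the conditional law of Y given X̄_K under P t
    (hξ : ∀ t : Bool, P t =
      ((P t).map Prod.fst).bind (fun v => (ξ t v).map (fun y => (v, y))))
    (h : ℝ → ℝ) (hh : Measurable h) (hbd : ∃ C, ∀ y, |h y| ≤ C)
    (g : (k : ℕ) → (Fin k → 𝓧) → ℝ) (hgm : ∀ k, Measurable (g k))
    (hg : ∀ k, 1 ≤ k → k ≤ K →
      MemLp (fun ω : (Fin K → 𝓧) × ℝ => g k (restr K ω.1 k)) 2 (P (c k)))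
    -- weak overlap: the counterfactual law of X̄_k is a.c. w.r.t. its factual law
    (hac : ∀ k, 1 ≤ k → k ≤ K →
      seqMeasure (fun j => κ j (c j)) k ≪ (P (c k)).map (fun ω => restr K ω.1 k))
    -- square-integrability of the true weights α_k
    (hα : ∀ k, 1 ≤ k → k ≤ K →
      MemLp (fun ω : (Fin K → 𝓧) × ℝ =>
        ((seqMeasure (fun j => κ j (c j)) k).rnDeriv
          ((P (c k)).map (fun ω' => restr K ω'.1 k)) (restr K ω.1 k)).toReal)
        2 (P (c k))) :
    (∫ ω, g 1 (restr K ω.1 1) ∂(P (c 0)))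
      + ∑ j ∈ Finset.range K,
          ∫ ω, ((seqMeasure (fun i => κ i (c i)) (j + 1)).rnDeriv
                ((P (c (j + 1))).map (fun ω' => restr K ω'.1 (j + 1)))
                (restr K ω.1 (j + 1))).toReal
              * ((if j + 1 = K then h ω.2 else g (j + 2) (restr K ω.1 (j + 2)))
                  - g (j + 1) (restr K ω.1 (j + 1))) ∂(P (c (j + 1)))
    = ∫ y, h y ∂((seqMeasure (fun j => κ j (c j)) K).bind (fun v => ξ (c K) v)) := by
  set M := seqMeasure (fun i => κ i (c i))
  have hrestr : ∀ k, Measurable fun ω : (Fin K → 𝓧) × ℝ => restr K ω.1 k :=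
    fun k => (measurable_restr K k).comp measurable_fst
  have hg_int : ∀ k, 1 ≤ k → k ≤ K → Integrable (g k) (M k) := fun k h1 h2 =>
    Measure.integrable_of_integrable_rnDeriv_map_mul (hrestr k) (hac k h1 h2) (hgm k)
      ((hα k h1 h2).integrable_mul (hg k h1 h2))
  let E : ℕ → ℝ := fun k => if k < K then ∫ v, g (k + 1) v ∂(M (k + 1))
    else ∫ y, h y ∂((M K).bind fun v => ξ (c K) v)
  have hbase : ∫ ω, g 1 (restr K ω.1 1) ∂(P (c 0)) = E 0 := by
    rw [← integral_map (hrestr 1).aemeasurable (hgm 1).aestronglyMeasurable, hκ (c 0) 0 hK,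
      Measure.map_eq_dirac_of_subsingleton _ _ (fun i => i.elim0)]
    simp only [E, if_pos hK]
    rfl
  rw [Finset.sum_congr rfl (g := fun j => E (j + 1) - E j) fun j hj => ?_, Finset.sum_range_sub,
    hbase]
  · simp only [E, lt_irrefl, if_false]
    ring
  have hj : j < K := Finset.mem_range.mp hj
  rcases (Nat.succ_le_of_lt hj).lt_or_eq with hlt | rfl
  · simp only [E, if_pos hj, if_pos hlt, if_neg hlt.ne]
    exact Measure.integral_rnDeriv_map_mul_sub (hrestr (j + 2)) measurable_init
      (fun ω => init_restr K (j + 1) ω.1) (κ (j + 1) (c (j + 1))) measurable_snoc_uncurry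
      (fun _ _ => Fin.init_snoc ..) (hκ _ _ hlt) (hac _ le_add_self hj) (hgm _) (hgm _)
      (hg_int _ le_add_self hlt) (hg_int _ le_add_self hj)
  · simp only [E, if_pos hj, lt_irrefl, if_false, if_true, restr_self]
    have hacK := hac (j + 1) le_add_self le_rfl
    simp only [restr_self] at hacK
    obtain ⟨C, hC⟩ := hbd
    exact Measure.integral_rnDeriv_fst_mul_sub (ξ (c (j + 1))) (hξ _) hacK hh (hgm _)
      (.of_bound hh.aestronglyMeasurable C (.of_forall hC)) (hg_int _ le_add_self le_rfl)
end

section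
/- (Doubly-robust simplification under full independence, case c_{K+1}=0) Suppose under both P⁰ and P¹ the explanatory variables X₁,…,X_K are mutually independent, and the joint law factors as P^t = P^t_{Y|X} ⊗ ∏_k P^t_{X_k}. Fix a change vector c with c_{K+1} = 0, and let X_c = (X_k : c_k = 1), X_{−c} = (X_k : c_k = 0). Define θ^c = ∫ h(y) dP⁰_{Y|X} ∏_{k: c_k=1} dP¹_{X_k} ∏_{k: c_k=0} dP⁰_{X_k}. Let γ(x_c) = E_{P⁰}[h(Y) | X_c = x_c] and α(x_c) = dP¹_{X_c}/dP⁰_{X_c}(x_c) (which exists by overlap). Then for any pair (g, a) of square-integrable functions of X_c with g = γ or a = α, E_{P¹}[g(X_c)] + E_{P⁰}[a(X_c)(h(Y) − g(X_c))] = θ^c. -/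
/-!
Write `F x = ∫ h d(P⁰.condKernel x)` and let `G u = ∫ F (u, w) dP⁰_{X_{-c}}(w)` integrate out the
unshifted coordinates. Disintegrating `P⁰` and then splitting `P⁰_X = P⁰_{X_c} ⊗ P⁰_{X_{-c}}` by
Fubini gives `E_{P⁰}[φ(X_c) h(Y)] = E_{P⁰}[φ(X_c) G(X_c)]` for every square-integrable `φ`, so `G`
is the regression `γ`; the same splitting of `∏_{c_k=1} P¹_{X_k} ⊗ ∏_{c_k=0} P⁰_{X_k}` gives
`θ^c = E_{P¹}[G(X_c)]`. The doubly-robust identity holds for any such `G`: if `g = γ`, then `g = G`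
a.e. and the correction term vanishes; if `a = α`, then `E_{P¹}[g] = E_{P⁰}[a g]` and
`E_{P¹}[G] = E_{P⁰}[a G] = E_{P⁰}[a(X_c) h(Y)]`.
-/

open MeasureTheory ProbabilityTheory

lemma norm_integral_le_of_forall_norm_le {β E : Type*} [MeasurableSpace β]
    [NormedAddCommGroup E] [NormedSpace ℝ E] (ρ : Measure β) [IsProbabilityMeasure ρ]
    {f : β → E} {C : ℝ} (hfC : ∀ x, ‖f x‖ ≤ C) :
    ‖∫ x, f x ∂ρ‖ ≤ C := by
  simpa using norm_integral_le_of_norm_le_const (μ := ρ) (.of_forall hfC)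

lemma integral_indicator_one_mul {β : Type*} [MeasurableSpace β] (ρ : Measure β) {B : Set β}
    (hB : MeasurableSet B) (f : β → ℝ) :
    ∫ x, B.indicator 1 x * f x ∂ρ = ∫ x in B, f x ∂ρ := by
  rw [← integral_indicator hB]
  congr 1 with x
  by_cases hx : x ∈ B <;> simp [hx]

section IntegralCompl

variable {ι α : Type*} [MeasurableSpace α] (p : ι → Prop) [DecidablePred p]

noncomputable def integralCompl (κ : Measure ({i // ¬p i} → α)) (f : (ι → α) → ℝ)
    (u : {i // p i} → α) : ℝ :=
  ∫ w, f ((MeasurableEquiv.piEquivPiSubtypeProd (fun _ : ι => α) p).symm (u, w)) ∂κ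

lemma stronglyMeasurable_integralCompl (κ : Measure ({i // ¬p i} → α)) [SFinite κ]
    {f : (ι → α) → ℝ} (hf : StronglyMeasurable f) :
    StronglyMeasurable (integralCompl p κ f) :=
  (hf.comp_measurable (MeasurableEquiv.measurable _)).integral_prod_right'

lemma norm_integralCompl_le (κ : Measure ({i // ¬p i} → α)) [IsProbabilityMeasure κ]
    {f : (ι → α) → ℝ} {C : ℝ} (hfC : ∀ x, ‖f x‖ ≤ C) (u : {i // p i} → α) :
    ‖integralCompl p κ f u‖ ≤ C :=
  norm_integral_le_of_forall_norm_le κ fun _ => hfC _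

variable [Fintype ι]

lemma map_restrict_pi (μ : ι → Measure α) [∀ i, IsProbabilityMeasure (μ i)] :
    (Measure.pi μ).map (fun x (i : {i // p i}) => x i.1)
      = Measure.pi fun i : {i // p i} => μ i := by
  rw [show (fun x (i : {i // p i}) => x i.1)
      = Prod.fst ∘ MeasurableEquiv.piEquivPiSubtypeProd (fun _ : ι => α) p from rfl,
    ← Measure.map_map measurable_fst (MeasurableEquiv.measurable _),
    (measurePreserving_piEquivPiSubtypeProd μ p).map_eq, Measure.map_fst_prod, measure_univ,
    one_smul]

lemma integral_pi_eq_integral_integralCompl (μ : ι → Measure α) [∀ i, SigmaFinite (μ i)]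
    {f : (ι → α) → ℝ} (hf : Integrable f (Measure.pi μ)) :
    ∫ x, f x ∂Measure.pi μ = ∫ u, integralCompl p (Measure.pi fun i : {i // ¬p i} => μ i) f u
      ∂Measure.pi fun i : {i // p i} => μ i := by
  have hψ := (measurePreserving_piEquivPiSubtypeProd μ p).symm
  rw [← hψ.integral_comp', integral_prod]
  · rfl
  · exact (hψ.integrable_comp_emb (MeasurableEquiv.measurableEmbedding _)).mpr hf

lemma integral_comp_restrict_mul_eq_integral_mul_integralCompl (μ : ι → Measure α)
    [∀ i, IsProbabilityMeasure (μ i)] {φ : ({i // p i} → α) → ℝ}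
    (hφ : Integrable φ (Measure.pi fun i : {i // p i} => μ i)) {F : (ι → α) → ℝ}
    (hF : AEStronglyMeasurable F (Measure.pi μ)) {C : ℝ} (hFC : ∀ x, ‖F x‖ ≤ C) :
    ∫ x, φ (fun i : {i // p i} => x i.1) * F x ∂Measure.pi μ
      = ∫ u, φ u * integralCompl p (Measure.pi fun i : {i // ¬p i} => μ i) F u
          ∂Measure.pi fun i : {i // p i} => μ i := by
  have hφr : Integrable (fun x : ι → α => φ fun i : {i // p i} => x i.1) (Measure.pi μ) := by
    rw [← map_restrict_pi p μ] at hφ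
    exact hφ.comp_measurable (by fun_prop)
  rw [integral_pi_eq_integral_integralCompl p μ (hφr.mul_bdd hF (.of_forall hFC))]
  refine integral_congr_ae (.of_forall fun u => ?_)
  have hrestrict : ∀ w, (fun i : {i // p i} =>
      (MeasurableEquiv.piEquivPiSubtypeProd (fun _ : ι => α) p).symm (u, w) i.1) = u := fun w =>
    congrArg Prod.fst ((MeasurableEquiv.piEquivPiSubtypeProd (fun _ : ι => α) p).apply_symm_apply _)
  simp only [integralCompl, hrestrict, integral_const_mul]

lemma integral_pi_ite_eq_integral_integralCompl (μ₁ μ₀ : ι → Measure α)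
    [∀ i, SigmaFinite (μ₁ i)] [∀ i, SigmaFinite (μ₀ i)] {f : (ι → α) → ℝ}
    (hf : Integrable f (Measure.pi fun i => if p i then μ₁ i else μ₀ i)) :
    ∫ x, f x ∂Measure.pi (fun i => if p i then μ₁ i else μ₀ i)
      = ∫ u, integralCompl p (Measure.pi fun i : {i // ¬p i} => μ₀ i) f u
          ∂Measure.pi fun i : {i // p i} => μ₁ i := by
  have : ∀ i, SigmaFinite (if p i then μ₁ i else μ₀ i) := fun i => by
    split_ifs <;> infer_instance
  have h₁ : (fun i : {i // p i} => if p i then μ₁ i else μ₀ i) = fun i : {i // p i} => μ₁ i :=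
    funext fun i => if_pos i.2
  have h₀ : (fun i : {i // ¬p i} => if p i then μ₁ i else μ₀ i) = fun i : {i // ¬p i} => μ₀ i :=
    funext fun i => if_neg i.2
  rw [integral_pi_eq_integral_integralCompl p _ hf, h₁, h₀]

end IntegralCompl

section DoublyRobust

variable {Ω E : Type*} [MeasurableSpace Ω] [MeasurableSpace E] {P : Measure Ω}
  [IsFiniteMeasure P] {π : Ω → E} {Z : Ω → ℝ} {G : E → ℝ}

lemma ae_eq_of_comp_ae_eq_condExp (hπ : Measurable π) (hZ : Integrable Z P)
    (hG : Integrable G (P.map π))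
    (hZG : ∀ φ : E → ℝ, MemLp φ 2 (P.map π) →
      ∫ ω, φ (π ω) * Z ω ∂P = ∫ u, φ u * G u ∂P.map π)
    {g : E → ℝ} (hg : Integrable g (P.map π))
    (hgZ : (fun ω => g (π ω)) =ᵐ[P] P[Z | MeasurableSpace.comap π inferInstance]) :
    g =ᵐ[P.map π] G := by
  refine hg.ae_eq_of_forall_setIntegral_eq g G hG fun A hA _ => ?_
  calc ∫ u in A, g u ∂P.map π
      = ∫ ω in π ⁻¹' A, g (π ω) ∂P := setIntegral_map hA hg.aestronglyMeasurable hπ.aemeasurable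
    _ = ∫ ω in π ⁻¹' A, P[Z | MeasurableSpace.comap π inferInstance] ω ∂P :=
        integral_congr_ae (ae_restrict_of_ae hgZ)
    _ = ∫ ω in π ⁻¹' A, Z ω ∂P := setIntegral_condExp hπ.comap_le hZ ⟨A, hA, rfl⟩
    _ = ∫ ω, A.indicator 1 (π ω) * Z ω ∂P := (integral_indicator_one_mul P (hπ hA) Z).symm
    _ = ∫ u, A.indicator 1 u * G u ∂P.map π :=
        hZG _ (memLp_indicator_const 2 hA 1 (.inr (measure_ne_top _ _)))
    _ = ∫ u in A, G u ∂P.map π := integral_indicator_one_mul _ hA G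

theorem integral_add_integral_mul_sub_eq_of_doublyRobust (hπ : Measurable π)
    {μ : Measure E} [SigmaFinite μ] (hμ : μ ≪ P.map π) (hZ : MemLp Z 2 P)
    (hG : MemLp G 2 (P.map π))
    (hZG : ∀ φ : E → ℝ, MemLp φ 2 (P.map π) →
      ∫ ω, φ (π ω) * Z ω ∂P = ∫ u, φ u * G u ∂P.map π)
    {g a : E → ℝ} (hg : MemLp g 2 (P.map π)) (ha : MemLp a 2 (P.map π))
    (hrob : (fun ω => g (π ω)) =ᵐ[P] P[Z | MeasurableSpace.comap π inferInstance]
      ∨ a =ᵐ[P.map π] fun u => (μ.rnDeriv (P.map π) u).toReal) :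
    ∫ u, g u ∂μ + ∫ ω, a (π ω) * (Z ω - g (π ω)) ∂P = ∫ u, G u ∂μ := by
  have haπ : MemLp (fun ω => a (π ω)) 2 P :=
    (memLp_map_measure_iff ha.aestronglyMeasurable hπ.aemeasurable).mp ha
  have hgπ : MemLp (fun ω => g (π ω)) 2 P :=
    (memLp_map_measure_iff hg.aestronglyMeasurable hπ.aemeasurable).mp hg
  have hresidual : ∫ ω, a (π ω) * (Z ω - g (π ω)) ∂P
      = ∫ u, a u * G u ∂P.map π - ∫ u, a u * g u ∂P.map π := by
    have haZ : Integrable (fun ω => a (π ω) * Z ω) P := haπ.integrable_mul hZ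
    have hag : Integrable (fun ω => a (π ω) * g (π ω)) P := haπ.integrable_mul hgπ
    have hagE : Integrable (fun u => a u * g u) (P.map π) := ha.integrable_mul hg
    simp_rw [mul_sub]
    rw [integral_sub haZ hag, hZG a ha, integral_map hπ.aemeasurable hagE.aestronglyMeasurable]
  rcases hrob with hgγ | haα
  · have hgG : g =ᵐ[P.map π] G := ae_eq_of_comp_ae_eq_condExp hπ (hZ.integrable one_le_two)
      (hG.integrable one_le_two) hZG (hg.integrable one_le_two) hgγ
    have hagG : ∫ u, a u * g u ∂P.map π = ∫ u, a u * G u ∂P.map π :=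
      integral_congr_ae (hgG.mono fun u hu => by simp only [hu])
    rw [hresidual, hagG, integral_congr_ae (hμ.ae_eq hgG), sub_self, add_zero]
  · have hreweight : ∀ f : E → ℝ, ∫ u, f u ∂μ = ∫ u, a u * f u ∂P.map π := fun f => by
      rw [← integral_toReal_rnDeriv_mul hμ]
      exact integral_congr_ae (haα.mono fun u hu => by simp only [hu])
    rw [hresidual, hreweight g, hreweight G]
    ring

end DoublyRobust

section IndependentCovariates

variable {𝓧 ι : Type*} [MeasurableSpace 𝓧] [Fintype ι] (p : ι → Prop) [DecidablePred p]
  {P : Measure ((ι → 𝓧) × ℝ)} {μ : ι → Measure 𝓧} [∀ i, IsProbabilityMeasure (μ i)]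

lemma map_restrict_fst_eq_pi (hP : P.map Prod.fst = Measure.pi μ) :
    P.map (fun ω (i : {i // p i}) => ω.1 i.1) = Measure.pi fun i : {i // p i} => μ i := by
  rw [← map_restrict_pi p μ, ← hP, Measure.map_map (by fun_prop) measurable_fst]
  rfl

lemma integral_comp_restrict_mul_eq_integral_mul_integralCompl_condKernel
    [IsProbabilityMeasure P] (hP : P.map Prod.fst = Measure.pi μ) {h : ℝ → ℝ} (hh : Measurable h)
    {M : ℝ} (hM : ∀ y, ‖h y‖ ≤ M) {φ : ({i // p i} → 𝓧) → ℝ}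
    (hφ : Integrable φ (P.map fun ω (i : {i // p i}) => ω.1 i.1)) :
    ∫ ω, φ (fun i : {i // p i} => ω.1 i.1) * h ω.2 ∂P
      = ∫ u, φ u * integralCompl p (Measure.pi fun i : {i // ¬p i} => μ i)
          (fun x => ∫ y, h y ∂P.condKernel x) u ∂P.map fun ω (i : {i // p i}) => ω.1 i.1 := by
  have hint : Integrable (fun ω => φ (fun i : {i // p i} => ω.1 i.1) * h ω.2) P :=
    (hφ.comp_measurable (by fun_prop)).mul_bdd (hh.comp measurable_snd).aestronglyMeasurable
      (.of_forall fun ω => hM ω.2)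
  rw [map_restrict_fst_eq_pi p hP] at hφ ⊢
  refine (Measure.integral_condKernel hint).symm.trans ?_
  simp only [integral_const_mul]
  rw [Measure.fst, hP]
  exact integral_comp_restrict_mul_eq_integral_mul_integralCompl p μ hφ
    (hh.stronglyMeasurable.integral_kernel).aestronglyMeasurable
    fun _ => norm_integral_le_of_forall_norm_le _ hM

end IndependentCovariates

theorem doubly_robust_independent_case_general
    {𝓧 : Type*} [MeasurableSpace 𝓧] {K : ℕ}
    (P0 P1 : Measure ((Fin K → 𝓧) × ℝ))
    [IsProbabilityMeasure P0] [IsProbabilityMeasure P1]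
    (ν : Bool → Fin K → Measure 𝓧) [∀ t k, IsProbabilityMeasure (ν t k)]
    -- full independence: the X-marginals are product measures
    (hind0 : P0.map Prod.fst = Measure.pi (ν false))
    (hind1 : P1.map Prod.fst = Measure.pi (ν true))
    (c : Fin K → Bool)
    (h : ℝ → ℝ) (hh : Measurable h) (hbd : ∃ M, ∀ y, |h y| ≤ M)
    -- overlap for the shifted sub-vector X_c
    (hac : P1.map (fun ω : (Fin K → 𝓧) × ℝ => fun i : {k // c k = true} => ω.1 i.1)
        ≪ P0.map (fun ω : (Fin K → 𝓧) × ℝ => fun i : {k // c k = true} => ω.1 i.1))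
    (g a : ({k // c k = true} → 𝓧) → ℝ)
    (hg : MemLp g 2 (P0.map (fun ω : (Fin K → 𝓧) × ℝ => fun i : {k // c k = true} => ω.1 i.1)))
    (ha : MemLp a 2 (P0.map (fun ω : (Fin K → 𝓧) × ℝ => fun i : {k // c k = true} => ω.1 i.1)))
    -- double robustness: g is the true regression γ, or a is the true weight α
    (hrob :
      (fun ω : (Fin K → 𝓧) × ℝ => g (fun i : {k // c k = true} => ω.1 i.1)) =ᵐ[P0]
        P0[(fun ω : (Fin K → 𝓧) × ℝ => h ω.2) |
          MeasurableSpace.comap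
            (fun ω : (Fin K → 𝓧) × ℝ => fun i : {k // c k = true} => ω.1 i.1) inferInstance]
      ∨ a =ᵐ[P0.map (fun ω : (Fin K → 𝓧) × ℝ => fun i : {k // c k = true} => ω.1 i.1)]
          fun v =>
            ((P1.map (fun ω : (Fin K → 𝓧) × ℝ => fun i : {k // c k = true} => ω.1 i.1)).rnDeriv
              (P0.map (fun ω : (Fin K → 𝓧) × ℝ => fun i : {k // c k = true} => ω.1 i.1)) v).toReal) :
    (∫ v, g v ∂(P1.map (fun ω : (Fin K → 𝓧) × ℝ => fun i : {k // c k = true} => ω.1 i.1)))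
      + (∫ ω, a (fun i : {k // c k = true} => ω.1 i.1)
            * (h ω.2 - g (fun i : {k // c k = true} => ω.1 i.1)) ∂P0)
    = ∫ x, (∫ y, h y ∂(P0.condKernel x))
        ∂(Measure.pi (fun k => if c k then ν true k else ν false k)) := by
  obtain ⟨M, hM⟩ := hbd
  replace hM : ∀ y, ‖h y‖ ≤ M := hM
  have hF : StronglyMeasurable fun x => ∫ y, h y ∂P0.condKernel x :=
    hh.stronglyMeasurable.integral_kernel
  have hFM : ∀ x, ‖∫ y, h y ∂P0.condKernel x‖ ≤ M := fun _ =>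
    norm_integral_le_of_forall_norm_le _ hM
  have hG : MemLp (integralCompl (fun k => c k = true)
      (Measure.pi fun i : {k // ¬c k = true} => ν false i) fun x => ∫ y, h y ∂P0.condKernel x) 2
      (P0.map fun ω (i : {k // c k = true}) => ω.1 i.1) :=
    .of_bound (stronglyMeasurable_integralCompl _ _ hF).aestronglyMeasurable M
      (.of_forall (norm_integralCompl_le _ _ hFM))
  rw [integral_pi_ite_eq_integral_integralCompl _ _ _
      ((integrable_const M).mono' hF.aestronglyMeasurable (.of_forall hFM)),
    ← map_restrict_fst_eq_pi _ hind1]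
  exact integral_add_integral_mul_sub_eq_of_doublyRobust (by fun_prop) hac
    (.of_bound (hh.comp measurable_snd).aestronglyMeasurable M (.of_forall fun ω => hM ω.2)) hG
    (fun _ hφ => integral_comp_restrict_mul_eq_integral_mul_integralCompl_condKernel _ hind0 hh
      hM (hφ.integrable one_le_two)) hg ha hrob

/-- Doubly-robust simplification under full independence, case
c_{K+1} = 0: if under both samples the explanatory variables are mutually
independent (X-marginal is a product measure), then for the change vector c
(with the Y-mechanism kept at sample 0) the counterfactual parameter
θ^c = ∫ h(y) dP⁰_{Y|X} ∏_{c_k=1} dP¹_{X_k} ∏_{c_k=0} dP⁰_{X_k}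
is identified by a single doubly-robust equation in the sub-vector X_c,
provided g = γ (a version of E_{P⁰}[h(Y)|X_c]) or a = α = dP¹_{X_c}/dP⁰_{X_c}. -/
theorem doubly_robust_independent_case
    {𝓧 : Type*} [MeasurableSpace 𝓧] {K : ℕ}
    (P0 P1 : Measure ((Fin K → 𝓧) × ℝ))
    [IsProbabilityMeasure P0] [IsProbabilityMeasure P1]
    (ν : Bool → Fin K → Measure 𝓧) [∀ t k, IsProbabilityMeasure (ν t k)]
    -- full independence: the X-marginals are product measures
    (hind0 : P0.map Prod.fst = Measure.pi (ν false))
    (hind1 : P1.map Prod.fst = Measure.pi (ν true))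
    (c : Fin K → Bool)
    (h : ℝ → ℝ) (hh : Measurable h) (hbd : ∃ M, ∀ y, |h y| ≤ M)
    -- overlap for the shifted sub-vector X_c
    (hac : P1.map (fun ω : (Fin K → 𝓧) × ℝ => fun i : {k // c k = true} => ω.1 i.1)
        ≪ P0.map (fun ω : (Fin K → 𝓧) × ℝ => fun i : {k // c k = true} => ω.1 i.1))
    (hα : MemLp (fun v : {k // c k = true} → 𝓧 =>
        ((P1.map (fun ω : (Fin K → 𝓧) × ℝ => fun i : {k // c k = true} => ω.1 i.1)).rnDeriv
          (P0.map (fun ω : (Fin K → 𝓧) × ℝ => fun i : {k // c k = true} => ω.1 i.1)) v).toReal)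
      2 (P0.map (fun ω : (Fin K → 𝓧) × ℝ => fun i : {k // c k = true} => ω.1 i.1)))
    (g a : ({k // c k = true} → 𝓧) → ℝ) (hgm : Measurable g) (ham : Measurable a)
    (hg : MemLp g 2 (P0.map (fun ω : (Fin K → 𝓧) × ℝ => fun i : {k // c k = true} => ω.1 i.1)))
    (ha : MemLp a 2 (P0.map (fun ω : (Fin K → 𝓧) × ℝ => fun i : {k // c k = true} => ω.1 i.1)))
    -- double robustness: g is the true regression γ, or a is the true weight α
    (hrob :
      (fun ω : (Fin K → 𝓧) × ℝ => g (fun i : {k // c k = true} => ω.1 i.1)) =ᵐ[P0]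
        P0[(fun ω : (Fin K → 𝓧) × ℝ => h ω.2) |
          MeasurableSpace.comap
            (fun ω : (Fin K → 𝓧) × ℝ => fun i : {k // c k = true} => ω.1 i.1) inferInstance]
      ∨ a =ᵐ[P0.map (fun ω : (Fin K → 𝓧) × ℝ => fun i : {k // c k = true} => ω.1 i.1)]
          fun v =>
            ((P1.map (fun ω : (Fin K → 𝓧) × ℝ => fun i : {k // c k = true} => ω.1 i.1)).rnDeriv
              (P0.map (fun ω : (Fin K → 𝓧) × ℝ => fun i : {k // c k = true} => ω.1 i.1)) v).toReal) :
    (∫ v, g v ∂(P1.map (fun ω : (Fin K → 𝓧) × ℝ => fun i : {k // c k = true} => ω.1 i.1)))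
      + (∫ ω, a (fun i : {k // c k = true} => ω.1 i.1)
            * (h ω.2 - g (fun i : {k // c k = true} => ω.1 i.1)) ∂P0)
    = ∫ x, (∫ y, h y ∂(P0.condKernel x))
        ∂(Measure.pi (fun k => if c k then ν true k else ν false k)) :=
  doubly_robust_independent_case_general P0 P1 ν hind0 hind1 c h hh hbd hac g a hg ha hrob
end
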